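/- Let l, j be real numbers with 0 ≤ j < l, and write w = √(l² − j²). Then ∫₀^∞ y(y²+1)^{1/2} exp(−l√(y²+1)) I₀(jy) dy = w^{−5} e^{−w} ((w² + 3w + 3)l² − w² − w³). -/

import Mathlib

/-!
Since `∫_{-π}^{π} e^{z cos θ} dθ = 2π I₀(z)`, in polar coordinates `2π` times the integral is
`∫_{ℝ²} ⟨p⟩ e^{-l⟨p⟩ + j p₁} dp`, where `⟨p⟩ = √(|p|² + 1)`. Writing
`l = w cosh η`, `j = w sinh η`, the exponent is `-w` times the time coordinate of the point
`(p, ⟨p⟩)` of the hyperboloid after a boost of rapidity `η`. Boosts preserve the measure `dp / ⟨p⟩`,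
so the integral equals `∫ (cosh η ⟨q⟩ + sinh η q₁)² e^{-w⟨q⟩} dq / ⟨q⟩`. There the angular
integral is that of a trigonometric polynomial, and after `u = ⟨q⟩` the radial one is the elementary
`∫₁^∞ e^{-wu} (a u² - b) du`.
-/

noncomputable section
open Real MeasureTheory

def I0 (z : ℝ) : ℝ := (1 / π) * ∫ φ in (0:ℝ)..π, Real.exp (z * Real.cos φ)

open Set Filter Topology

/-- `⟨p⟩ = √(|p|² + 1)`, the time coordinate of the point of the unit hyperboloid `t² - |x|² = 1`
lying above `p`. -/
def japaneseBracket (p : ℝ × ℝ) : ℝ := √(p.1 ^ 2 + p.2 ^ 2 + 1)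

local notation "⟪" p "⟫" => japaneseBracket p

lemma japaneseBracket_sq (p : ℝ × ℝ) : ⟪p⟫ ^ 2 = p.1 ^ 2 + p.2 ^ 2 + 1 :=
  sq_sqrt (by positivity)

lemma japaneseBracket_pos (p : ℝ × ℝ) : 0 < ⟪p⟫ :=
  sqrt_pos.mpr (by positivity)

lemma abs_fst_lt_japaneseBracket (p : ℝ × ℝ) : |p.1| < ⟪p⟫ := by
  rw [← sqrt_sq_eq_abs]
  exact sqrt_lt_sqrt (sq_nonneg _) (by nlinarith [sq_nonneg p.2])

@[fun_prop]
lemma continuous_japaneseBracket : Continuous japaneseBracket := by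
  unfold japaneseBracket; fun_prop

@[fun_prop]
lemma measurable_japaneseBracket : Measurable japaneseBracket :=
  continuous_japaneseBracket.measurable

lemma japaneseBracket_polarCoord_symm (p : ℝ × ℝ) : ⟪polarCoord.symm p⟫ = √(p.1 ^ 2 + 1) := by
  simp only [japaneseBracket, polarCoord_symm_apply, mul_pow, ← mul_add, cos_sq_add_sin_sq,
    mul_one]

lemma hasDerivAt_sqrt_sq_add {a : ℝ} (ha : 0 < a) (x : ℝ) :
    HasDerivAt (fun x => √(x ^ 2 + a)) (x / √(x ^ 2 + a)) x := by
  have h := ((hasDerivAt_pow 2 x).add_const a).sqrt (by positivity)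
  convert h using 1
  field_simp
  ring

lemma sqrt_sq_add_one_le (r : ℝ) (hr : 0 ≤ r) : √(r ^ 2 + 1) ≤ r + 1 :=
  sqrt_le_iff.mpr ⟨by positivity, by nlinarith⟩

lemma le_sqrt_sq_add_one (r : ℝ) : r ≤ √(r ^ 2 + 1) :=
  (le_abs_self r).trans ((sqrt_sq_eq_abs r) ▸ sqrt_le_sqrt (by linarith))

lemma integrableOn_Ioi_pow_mul_exp_neg_mul (n : ℕ) {κ : ℝ} (hκ : 0 < κ) :
    IntegrableOn (fun r : ℝ => r ^ n * exp (-κ * r)) (Ioi 0) := by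
  have h := integrableOn_rpow_mul_exp_neg_mul_rpow (p := 1) (s := n)
    (by linarith [n.cast_nonneg (α := ℝ)]) one_pos hκ
  simpa only [rpow_natCast, rpow_one] using h

lemma integrableOn_Ioi_add_one_sq_mul_exp_neg_mul {κ : ℝ} (hκ : 0 < κ) :
    IntegrableOn (fun r : ℝ => (r + 1) ^ 2 * exp (-κ * r)) (Ioi 0) := by
  have h := ((integrableOn_Ioi_pow_mul_exp_neg_mul 2 hκ).add
    ((integrableOn_Ioi_pow_mul_exp_neg_mul 1 hκ).const_mul 2)).add
    (integrableOn_Ioi_pow_mul_exp_neg_mul 0 hκ)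
  refine h.congr_fun (fun r _ => ?_) measurableSet_Ioi
  simp only [Pi.add_apply]
  ring

lemma polarCoord_target_eq : polarCoord.target = Ioi (0:ℝ) ×ˢ Ioo (-π) π := rfl

lemma integrableOn_polarCoord_target_iff {E : Type*} [NormedAddCommGroup E] [NormedSpace ℝ E]
    {f : ℝ × ℝ → E} :
    IntegrableOn (fun p => p.1 • f (polarCoord.symm p)) polarCoord.target ↔ Integrable f := by
  rw [← integrableOn_univ, ← integrableOn_congr_set_ae polarCoord_source_ae_eq_univ,
    ← polarCoord.symm_image_target_eq_source,
    integrableOn_image_iff_integrableOn_abs_det_fderiv_smul volume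
      polarCoord.open_target.measurableSet
      (fun p _ => (hasFDerivAt_polarCoord_symm p).hasFDerivWithinAt) polarCoord.symm.injOn]
  refine integrableOn_congr_fun (fun p hp => ?_) polarCoord.open_target.measurableSet
  rw [det_fderivPolarCoordSymm, abs_of_pos hp.1]

lemma integral_eq_integral_polarCoord {E : Type*} [NormedAddCommGroup E] [NormedSpace ℝ E]
    {f : ℝ × ℝ → E} (hf : Integrable f) :
    ∫ p, f p = ∫ r in Ioi 0, ∫ θ in Ioo (-π) π, r • f (polarCoord.symm (r, θ)) := by
  rw [← integrableOn_polarCoord_target_iff, polarCoord_target_eq, Measure.volume_eq_prod] at hf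
  rw [← integral_comp_polarCoord_symm, polarCoord_target_eq, Measure.volume_eq_prod]
  exact setIntegral_prod _ hf

lemma integrable_japaneseBracket_mul_exp_neg {κ : ℝ} (hκ : 0 < κ) :
    Integrable (fun p => ⟪p⟫ * exp (-(κ * ⟪p⟫))) := by
  rw [← integrableOn_polarCoord_target_iff, polarCoord_target_eq, IntegrableOn,
    Measure.volume_eq_prod, ← Measure.prod_restrict]
  have hradial : IntegrableOn (fun r : ℝ => r * (√(r ^ 2 + 1) * exp (-(κ * √(r ^ 2 + 1)))))
      (Ioi 0) := by
    refine (integrableOn_Ioi_add_one_sq_mul_exp_neg_mul hκ).mono' (by fun_prop) ?_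
    refine (ae_restrict_iff' measurableSet_Ioi).mpr (.of_forall fun r (hr : 0 < r) => ?_)
    have hle := sqrt_sq_add_one_le r hr.le
    have hexp : exp (-(κ * √(r ^ 2 + 1))) ≤ exp (-κ * r) :=
      exp_le_exp.mpr (by nlinarith [le_sqrt_sq_add_one r])
    rw [norm_of_nonneg (by positivity)]
    calc r * (√(r ^ 2 + 1) * exp (-(κ * √(r ^ 2 + 1))))
        ≤ (r + 1) * ((r + 1) * exp (-κ * r)) := by gcongr; linarith
      _ = (r + 1) ^ 2 * exp (-κ * r) := by ring
  refine (hradial.comp_fst _).congr (.of_forall fun p => ?_)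
  simp only [smul_eq_mul, japaneseBracket_polarCoord_symm]

lemma integrable_japaneseBracket_mul_exp_neg_add_mul_fst {l j : ℝ} (hjl : |j| < l) :
    Integrable (fun p : ℝ × ℝ => ⟪p⟫ * exp (-(l * ⟪p⟫) + j * p.1)) := by
  refine (integrable_japaneseBracket_mul_exp_neg (sub_pos.mpr hjl)).mono' (by fun_prop)
    (.of_forall fun p => ?_)
  have hp := japaneseBracket_pos p
  have hjp : j * p.1 ≤ |j| * ⟪p⟫ := (le_abs_self _).trans <| by
    rw [abs_mul]; exact mul_le_mul_of_nonneg_left (abs_fst_lt_japaneseBracket p).le (abs_nonneg j)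
  rw [norm_of_nonneg (by positivity)]
  gcongr
  linarith

lemma integrable_sq_div_japaneseBracket_mul_exp_neg (c s : ℝ) {w : ℝ} (hw : 0 < w) :
    Integrable (fun q : ℝ × ℝ => (c * ⟪q⟫ + s * q.1) ^ 2 * exp (-(w * ⟪q⟫)) / ⟪q⟫) := by
  refine ((integrable_japaneseBracket_mul_exp_neg hw).const_mul ((|c| + |s|) ^ 2)).mono'
    (by fun_prop : Measurable _).aestronglyMeasurable (.of_forall fun q => ?_)
  have hq := japaneseBracket_pos q
  have hbound : |c * ⟪q⟫ + s * q.1| ≤ (|c| + |s|) * ⟪q⟫ := by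
    have := abs_fst_lt_japaneseBracket q
    calc |c * ⟪q⟫ + s * q.1| ≤ |c| * ⟪q⟫ + |s| * |q.1| := by
          simpa [abs_mul, abs_of_pos hq] using abs_add_le (c * ⟪q⟫) (s * q.1)
      _ ≤ (|c| + |s|) * ⟪q⟫ := by nlinarith [abs_nonneg s]
  rw [norm_of_nonneg (by positivity), div_le_iff₀ hq]
  calc (c * ⟪q⟫ + s * q.1) ^ 2 * exp (-(w * ⟪q⟫))
      ≤ ((|c| + |s|) * ⟪q⟫) ^ 2 * exp (-(w * ⟪q⟫)) := by
        exact mul_le_mul_of_nonneg_right (sq_le_sq' (abs_le.mp hbound).1 (abs_le.mp hbound).2)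
          (exp_pos _).le
    _ = _ := by ring

/-- For `c = cosh η`, `s = sinh η`, the Lorentz boost of rapidity `η` in the `(t, x₁)`-plane, read
in the chart `p ↦ (p, ⟨p⟩)` of the hyperboloid. -/
def lorentzBoost (c s : ℝ) (p : ℝ × ℝ) : ℝ × ℝ := (c * p.1 - s * ⟪p⟫, p.2)

lemma hasDerivAt_japaneseBracket_fst (x b : ℝ) :
    HasDerivAt (fun x => ⟪(x, b)⟫) (x / ⟪(x, b)⟫) x := by
  simpa only [japaneseBracket, add_assoc] using
    hasDerivAt_sqrt_sq_add (a := b ^ 2 + 1) (by positivity) x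

section LorentzBoost

variable {c s : ℝ} (hc : 0 < c) (hcs : c ^ 2 = s ^ 2 + 1)
include hc hcs

lemma japaneseBracket_lorentzBoost (p : ℝ × ℝ) :
    ⟪lorentzBoost c s p⟫ = c * ⟪p⟫ - s * p.1 := by
  have hp := japaneseBracket_pos p
  have hsc : |s| < c := abs_lt_of_sq_lt_sq (by linarith) hc.le
  have hpos : 0 < c * ⟪p⟫ - s * p.1 := by
    have : s * p.1 ≤ |s| * ⟪p⟫ := (le_abs_self _).trans <| by
      rw [abs_mul]; exact mul_le_mul_of_nonneg_left (abs_fst_lt_japaneseBracket p).le (abs_nonneg s)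
    nlinarith
  rw [japaneseBracket, ← sqrt_sq hpos.le, lorentzBoost]
  congr 1
  linear_combination (p.1 ^ 2 - ⟪p⟫ ^ 2) * hcs - japaneseBracket_sq p

lemma lorentzBoost_neg_lorentzBoost (p : ℝ × ℝ) : lorentzBoost c (-s) (lorentzBoost c s p) = p := by
  rw [lorentzBoost, japaneseBracket_lorentzBoost hc hcs, lorentzBoost]
  ext
  · linear_combination p.1 * hcs
  · rfl

lemma mul_japaneseBracket_lorentzBoost_add_mul_fst (p : ℝ × ℝ) :
    c * ⟪lorentzBoost c s p⟫ + s * (lorentzBoost c s p).1 = ⟪p⟫ := by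
  rw [japaneseBracket_lorentzBoost hc hcs, lorentzBoost]
  linear_combination ⟪p⟫ * hcs

lemma hasDerivAt_lorentzBoost_fst (x b : ℝ) :
    HasDerivAt (fun x => (lorentzBoost c s (x, b)).1)
      (⟪lorentzBoost c s (x, b)⟫ / ⟪(x, b)⟫) x := by
  refine (((hasDerivAt_id x).const_mul c).sub
    ((hasDerivAt_japaneseBracket_fst x b).const_mul s)).congr_deriv ?_
  rw [japaneseBracket_lorentzBoost hc hcs]
  field_simp [(japaneseBracket_pos (x, b)).ne']

lemma integral_lorentzBoost_slice (G : ℝ × ℝ → ℝ) (b : ℝ) :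
    ∫ x, G (lorentzBoost c s (x, b)) / ⟪(x, b)⟫ = ∫ y, G (y, b) / ⟪(y, b)⟫ := by
  set Φ : ℝ → ℝ := fun x => (lorentzBoost c s (x, b)).1
  have hsurj : Φ '' univ = univ := by
    rw [image_univ, range_eq_univ]
    intro y
    have hinv := lorentzBoost_neg_lorentzBoost hc (s := -s) (by rwa [neg_sq]) (y, b)
    rw [neg_neg] at hinv
    exact ⟨_, congrArg Prod.fst hinv⟩
  have hinv (x : ℝ) : lorentzBoost c (-s) (Φ x, b) = (x, b) :=
    lorentzBoost_neg_lorentzBoost hc hcs (x, b)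
  have hinj : InjOn Φ univ := fun x _ x' _ h => by
    simpa [hinv] using congrArg (fun y => lorentzBoost c (-s) (y, b)) h
  have h := integral_image_eq_integral_abs_deriv_smul MeasurableSet.univ
    (fun x _ => (hasDerivAt_lorentzBoost_fst hc hcs x b).hasDerivWithinAt) hinj
    (fun y => G (y, b) / ⟪(y, b)⟫)
  rw [hsurj, setIntegral_univ, setIntegral_univ] at h
  rw [h]
  congr 1
  funext x
  show _ = |⟪lorentzBoost c s (x, b)⟫ / ⟪(x, b)⟫| •
    (G (lorentzBoost c s (x, b)) / ⟪lorentzBoost c s (x, b)⟫)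
  have h1 := japaneseBracket_pos (x, b)
  have h2 := japaneseBracket_pos (lorentzBoost c s (x, b))
  rw [smul_eq_mul, abs_of_pos (div_pos h2 h1)]
  field_simp

lemma integral_comp_lorentzBoost_div_japaneseBracket {G : ℝ × ℝ → ℝ}
    (hG : Integrable fun p => G p / ⟪p⟫)
    (hGboost : Integrable fun p => G (lorentzBoost c s p) / ⟪p⟫) :
    ∫ p, G (lorentzBoost c s p) / ⟪p⟫ = ∫ p, G p / ⟪p⟫ := by
  rw [Measure.volume_eq_prod] at hG hGboost ⊢
  rw [integral_prod_symm _ hGboost, integral_prod_symm _ hG]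
  exact congrArg _ (funext (integral_lorentzBoost_slice hc hcs G))

end LorentzBoost

lemma integral_Ioo_neg_pi_pi_eq_intervalIntegral (f : ℝ → ℝ) :
    ∫ θ in Ioo (-π) π, f θ = ∫ θ in (-π)..π, f θ := by
  rw [intervalIntegral.integral_of_le (by linarith [pi_pos]), integral_Ioc_eq_integral_Ioo]

lemma integral_Ioo_exp_mul_cos (z : ℝ) :
    ∫ θ in Ioo (-π) π, exp (z * cos θ) = 2 * π * I0 z := by
  have hcont : Continuous fun θ => exp (z * cos θ) := by fun_prop
  have heven := intervalIntegral.integral_comp_neg (a := 0) (b := π) fun θ => exp (z * cos θ)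
  simp only [cos_neg, neg_zero] at heven
  rw [integral_Ioo_neg_pi_pi_eq_intervalIntegral,
    ← intervalIntegral.integral_add_adjacent_intervals (b := 0)
      (hcont.intervalIntegrable _ _) (hcont.intervalIntegrable _ _), ← heven, I0]
  field_simp
  ring

lemma integral_Ioo_add_mul_cos_sq (a b : ℝ) :
    ∫ θ in Ioo (-π) π, (a + b * cos θ) ^ 2 = 2 * π * (a ^ 2 + b ^ 2 / 2) := by
  have hexpand : (fun θ => (a + b * cos θ) ^ 2) =
      fun θ => a ^ 2 + 2 * a * b * cos θ + b ^ 2 * cos θ ^ 2 := by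
    funext θ; ring
  rw [integral_Ioo_neg_pi_pi_eq_intervalIntegral, hexpand, intervalIntegral.integral_add,
    intervalIntegral.integral_add, intervalIntegral.integral_const,
    intervalIntegral.integral_const_mul, intervalIntegral.integral_const_mul, integral_cos,
    integral_cos_sq]
  · simp only [sin_pi, sin_neg, cos_pi, cos_neg, smul_eq_mul]
    ring
  all_goals exact Continuous.intervalIntegrable (by fun_prop) _ _

lemma integral_japaneseBracket_mul_exp_neg_add_mul_fst {l j : ℝ} (hjl : |j| < l) :
    ∫ p : ℝ × ℝ, ⟪p⟫ * exp (-(l * ⟪p⟫) + j * p.1)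
      = 2 * π * ∫ y in Ioi 0, y * √(y ^ 2 + 1) * exp (-l * √(y ^ 2 + 1)) * I0 (j * y) := by
  rw [integral_eq_integral_polarCoord (integrable_japaneseBracket_mul_exp_neg_add_mul_fst hjl),
    ← integral_const_mul]
  refine setIntegral_congr_fun measurableSet_Ioi fun r _ => ?_
  have hintegrand (θ : ℝ) : r • (⟪polarCoord.symm (r, θ)⟫ *
        exp (-(l * ⟪polarCoord.symm (r, θ)⟫) + j * (polarCoord.symm (r, θ)).1))
      = r * √(r ^ 2 + 1) * exp (-l * √(r ^ 2 + 1)) * exp ((j * r) * cos θ) := by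
    rw [japaneseBracket_polarCoord_symm, polarCoord_symm_apply, smul_eq_mul, exp_add]
    ring_nf
  simp_rw [hintegrand]
  rw [integral_const_mul, integral_Ioo_exp_mul_cos]
  ring

lemma integral_sq_div_japaneseBracket_mul_exp_neg (c s : ℝ) {w : ℝ} (hw : 0 < w) :
    ∫ q : ℝ × ℝ, (c * ⟪q⟫ + s * q.1) ^ 2 * exp (-(w * ⟪q⟫)) / ⟪q⟫
      = 2 * π * ∫ r in Ioi 0, r / √(r ^ 2 + 1) * exp (-(w * √(r ^ 2 + 1))) *
          ((c ^ 2 + s ^ 2 / 2) * (r ^ 2 + 1) - s ^ 2 / 2) := by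
  rw [integral_eq_integral_polarCoord (integrable_sq_div_japaneseBracket_mul_exp_neg c s hw),
    ← integral_const_mul]
  refine setIntegral_congr_fun measurableSet_Ioi fun r _ => ?_
  have hintegrand (θ : ℝ) : r • ((c * ⟪polarCoord.symm (r, θ)⟫ + s * (polarCoord.symm (r, θ)).1)
        ^ 2 * exp (-(w * ⟪polarCoord.symm (r, θ)⟫)) / ⟪polarCoord.symm (r, θ)⟫)
      = r / √(r ^ 2 + 1) * exp (-(w * √(r ^ 2 + 1))) *
          (c * √(r ^ 2 + 1) + (s * r) * cos θ) ^ 2 := by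
    rw [japaneseBracket_polarCoord_symm, polarCoord_symm_apply, smul_eq_mul]
    ring
  simp_rw [hintegrand]
  rw [integral_const_mul, integral_Ioo_add_mul_cos_sq, mul_pow, sq_sqrt (by positivity)]
  ring

lemma integral_Ioi_div_sqrt_mul_exp_neg (a b : ℝ) {w : ℝ} (hw : 0 < w) :
    ∫ r in Ioi 0, r / √(r ^ 2 + 1) * exp (-(w * √(r ^ 2 + 1))) * (a * (r ^ 2 + 1) - b)
      = exp (-w) * (a * (1 / w + 2 / w ^ 2 + 2 / w ^ 3) - b / w) := by
  set v : ℝ → ℝ := fun r => √(r ^ 2 + 1)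
  -- an antiderivative of `u ↦ exp (-w u) (a u² - b)`, composed with the substitution `u = v r`
  set P : ℝ → ℝ := fun u => -(exp (-(w * u)) * (a * (u ^ 2 / w + 2 * u / w ^ 2 + 2 / w ^ 3) - b / w))
  have hP (u : ℝ) : HasDerivAt P (exp (-(w * u)) * (a * u ^ 2 - b)) u := by
    have h := (((hasDerivAt_id u).const_mul w).neg.exp.mul
      ((((((hasDerivAt_pow 2 u).div_const w).add (((hasDerivAt_id u).const_mul 2).div_const
        (w ^ 2))).add_const (2 / w ^ 3)).const_mul a).sub_const (b / w))).neg
    refine h.congr_deriv ?_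
    simp only [Pi.add_apply, Pi.neg_apply, id]
    field_simp
    ring
  have hderiv (r : ℝ) (_ : r ∈ Ici (0 : ℝ)) : HasDerivAt (P ∘ v)
      (r / √(r ^ 2 + 1) * exp (-(w * √(r ^ 2 + 1))) * (a * (r ^ 2 + 1) - b)) r := by
    refine ((hP (v r)).comp r (hasDerivAt_sqrt_sq_add one_pos r)).congr_deriv ?_
    simp only [v, sq_sqrt (by positivity : 0 ≤ r ^ 2 + 1)]
    ring
  have hint : IntegrableOn
      (fun r => r / √(r ^ 2 + 1) * exp (-(w * √(r ^ 2 + 1))) * (a * (r ^ 2 + 1) - b)) (Ioi 0) := by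
    refine ((integrableOn_Ioi_add_one_sq_mul_exp_neg_mul hw).const_mul (|a| + |b|)).mono'
      (by fun_prop) ((ae_restrict_iff' measurableSet_Ioi).mpr (.of_forall fun r (hr : 0 < r) => ?_))
    have hv := sqrt_pos.mpr (by positivity : 0 < r ^ 2 + 1)
    have hratio : r / √(r ^ 2 + 1) ≤ 1 := (div_le_one hv).mpr (le_sqrt_sq_add_one r)
    have hexp : exp (-(w * √(r ^ 2 + 1))) ≤ exp (-w * r) :=
      exp_le_exp.mpr (by nlinarith [le_sqrt_sq_add_one r])
    have hpoly : |a * (r ^ 2 + 1) - b| ≤ (|a| + |b|) * (r + 1) ^ 2 := by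
      refine (abs_sub _ _).trans ?_
      rw [abs_mul, abs_of_pos (by positivity : 0 < r ^ 2 + 1)]
      nlinarith [abs_nonneg a, abs_nonneg b]
    rw [norm_mul, norm_mul, norm_of_nonneg (by positivity : 0 ≤ r / √(r ^ 2 + 1)),
      norm_of_nonneg (exp_pos _).le, Real.norm_eq_abs]
    calc r / √(r ^ 2 + 1) * exp (-(w * √(r ^ 2 + 1))) * |a * (r ^ 2 + 1) - b|
        ≤ 1 * exp (-w * r) * ((|a| + |b|) * (r + 1) ^ 2) := by gcongr
      _ = (|a| + |b|) * ((r + 1) ^ 2 * exp (-w * r)) := by ring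
  have hlim : Tendsto (P ∘ v) atTop (𝓝 0) := by
    have hv : Tendsto v atTop atTop := tendsto_atTop_mono le_sqrt_sq_add_one tendsto_id
    have hdecay (n : ℝ) := tendsto_rpow_mul_exp_neg_mul_atTop_nhds_zero n w hw
    have hP := (((hdecay 2).const_mul (a / w)).add ((hdecay 1).const_mul (2 * a / w ^ 2))).add
      ((hdecay 0).const_mul (2 * a / w ^ 3 - b / w)) |>.neg
    simp only [mul_zero, add_zero, neg_zero] at hP
    refine (hP.congr fun u => ?_).comp hv
    simp only [P, rpow_two, rpow_one, rpow_zero, neg_mul]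
    ring
  rw [integral_Ioi_of_hasDerivAt_of_tendsto' hderiv hint hlim]
  simp only [Function.comp, P, v]
  norm_num

/-- The exact formula (2.15) for `K̃₂(l,j)`, with `w = √(l²−j²)`:
`K̃₂(l,j) = w⁻⁵ e^{−w} ((w² + 3w + 3)l² − w² − w³)`. -/
theorem K2_tilde_formula (l j w : ℝ) (hj : 0 ≤ j) (hjl : j < l)
    (hw : w = Real.sqrt (l ^ 2 - j ^ 2)) :
    ∫ y in Set.Ioi (0:ℝ),
        y * Real.sqrt (y ^ 2 + 1) * Real.exp (-l * Real.sqrt (y ^ 2 + 1)) * I0 (j * y)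
      = (w ^ 5)⁻¹ * Real.exp (-w) * ((w ^ 2 + 3 * w + 3) * l ^ 2 - w ^ 2 - w ^ 3) := by
  have hjl' : |j| < l := by rwa [abs_of_nonneg hj]
  have hw2 : w ^ 2 = l ^ 2 - j ^ 2 := hw ▸ sq_sqrt (by nlinarith)
  have hw0 : 0 < w := hw ▸ sqrt_pos.mpr (by nlinarith)
  -- `l = w cosh η`, `j = w sinh η`
  set c := l / w
  set s := j / w
  have hc : 0 < c := div_pos (by linarith) hw0
  have hcs : c ^ 2 = s ^ 2 + 1 := by
    simp only [c, s]
    field_simp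
    linarith
  set G : ℝ × ℝ → ℝ := fun q => (c * ⟪q⟫ + s * q.1) ^ 2 * exp (-(w * ⟪q⟫))
  have hGboost (p : ℝ × ℝ) : G (lorentzBoost c s p) / ⟪p⟫ = ⟪p⟫ * exp (-(l * ⟪p⟫) + j * p.1) := by
    have hexp : -(w * (c * ⟪p⟫ - s * p.1)) = -(l * ⟪p⟫) + j * p.1 := by
      simp only [c, s]
      field_simp
      ring
    simp only [G]
    rw [mul_japaneseBracket_lorentzBoost_add_mul_fst hc hcs, japaneseBracket_lorentzBoost hc hcs,
      hexp]
    field_simp [(japaneseBracket_pos p).ne']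
  refine mul_left_cancel₀ two_pi_pos.ne' ?_
  calc 2 * π * _ = ∫ p, G (lorentzBoost c s p) / ⟪p⟫ := by
        simp only [hGboost]
        exact (integral_japaneseBracket_mul_exp_neg_add_mul_fst hjl').symm
    _ = ∫ p, G p / ⟪p⟫ := by
        refine integral_comp_lorentzBoost_div_japaneseBracket hc hcs
          (integrable_sq_div_japaneseBracket_mul_exp_neg c s hw0) ?_
        simpa only [hGboost] using integrable_japaneseBracket_mul_exp_neg_add_mul_fst hjl'
    _ = 2 * π * (exp (-w) *
          ((c ^ 2 + s ^ 2 / 2) * (1 / w + 2 / w ^ 2 + 2 / w ^ 3) - s ^ 2 / 2 / w)) := by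
        rw [integral_sq_div_japaneseBracket_mul_exp_neg c s hw0,
          integral_Ioi_div_sqrt_mul_exp_neg _ _ hw0]
    _ = _ := by
        simp only [c, s]
        field_simp
        linear_combination (2 * w + 2) * hw2

end
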